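/- Let m ≥ 1 and let d = 2e be an even positive integer. For every homogeneous polynomial f ∈ ℂ[x_0,…,x_m] of degree d and every c ∈ ℂ, the polynomials f and f + c·q^e have identical eigen-minors: M_{ij}(f + c·q^e) = M_{ij}(f) as polynomials for all 0 ≤ i, j ≤ m. In particular f and f + c·q^{d/2} have the same eigenscheme, which gives the containment {f + c·q^{d/2} : c ∈ ℂ} ⊆ τ^{-1}(τ(f)) in the even-degree case of Theorem A. -/

import Mathlib

/-!
The eigen-minor `M_{ij}` is the derivation `x_j ∂_i - x_i ∂_j`, the infinitesimal rotation in the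
`(x_i, x_j)`-plane. It kills `q` because `∂_i q = 2 x_i`, hence by the Leibniz rule it kills every
`c q^e`, and by additivity `M_{ij}(f + c q^e) = M_{ij}(f)`.
-/

open MvPolynomial

namespace MvPolynomial

variable {σ R : Type*} [CommRing R]

noncomputable def eigenMinor (i j : σ) : Derivation R (MvPolynomial σ R) (MvPolynomial σ R) :=
  (X j : MvPolynomial σ R) • pderiv i - (X i : MvPolynomial σ R) • pderiv j

theorem eigenMinor_apply (i j : σ) (f : MvPolynomial σ R) :
    eigenMinor i j f = X j * pderiv i f - X i * pderiv j f := by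
  simp [eigenMinor]

variable [Fintype σ]

theorem pderiv_sum_X_sq (i : σ) : pderiv i (∑ r, (X r : MvPolynomial σ R) ^ 2) = 2 * X i := by
  classical
  simp [Derivation.leibniz_pow, pderiv_X, Pi.single_apply, mul_comm]

theorem eigenMinor_sum_X_sq (i j : σ) : eigenMinor i j (∑ r, (X r : MvPolynomial σ R) ^ 2) = 0 := by
  rw [eigenMinor_apply, pderiv_sum_X_sq, pderiv_sum_X_sq]
  ring

theorem eigenMinor_C_mul_sum_X_sq_pow (i j : σ) (c : R) (e : ℕ) :
    eigenMinor i j (C c * (∑ r, (X r : MvPolynomial σ R) ^ 2) ^ e) = 0 := by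
  rw [Derivation.leibniz, Derivation.leibniz_pow, eigenMinor_sum_X_sq, ← algebraMap_eq,
    Derivation.map_algebraMap]
  simp

end MvPolynomial

theorem eigenminors_invariant_add_q_pow_general (m e : ℕ)
    (f : MvPolynomial (Fin (m + 1)) ℂ) (c : ℂ) :
    ∀ i j : Fin (m + 1),
      X j * pderiv i (f + C c * (∑ r : Fin (m + 1), X r ^ 2) ^ e)
          - X i * pderiv j (f + C c * (∑ r : Fin (m + 1), X r ^ 2) ^ e) =
        X j * pderiv i f - X i * pderiv j f := by
  intro i j
  rw [← eigenMinor_apply, ← eigenMinor_apply, map_add, eigenMinor_C_mul_sum_X_sq_pow, add_zero]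

theorem eigenminors_invariant_add_q_pow (m e : ℕ) (hm : 1 ≤ m) (he : 1 ≤ e)
    (f : MvPolynomial (Fin (m + 1)) ℂ) (hf : f.IsHomogeneous (2 * e)) (c : ℂ) :
    ∀ i j : Fin (m + 1),
      X j * pderiv i (f + C c * (∑ r : Fin (m + 1), X r ^ 2) ^ e)
          - X i * pderiv j (f + C c * (∑ r : Fin (m + 1), X r ^ 2) ^ e) =
        X j * pderiv i f - X i * pderiv j f :=
  eigenminors_invariant_add_q_pow_general m e f c
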